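/- Disjoint monotonicity for Angel: For every hybrid game α and all sets of states X, Y, A, B ⊆ S, if X ⊆ A and X ∩ Y = ∅, then ς_α(X,Y) ⊆ ς_α(A,B); here B may be an arbitrary set of states and A and B may overlap. -/
import Mathlib


open Set

/-- Hybrid games over a variable set `V`. Terms/ODE right-hand sides are
interpreted as functions from states `V → ℝ` to `ℝ`; tests and evolution
domain constraints are sets of states. -/
inductive Game (V : Type*) where
  | assign (x : V) (e : (V → ℝ) → ℝ)
  | ode (x : V) (f : (V → ℝ) → ℝ) (Q : Set (V → ℝ))
  | test (Q : Set (V → ℝ))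
  | choice (a b : Game V)
  | seq (a b : Game V)
  | dual (a : Game V)
  | star (a : Game V)

variable {V : Type*} [DecidableEq V]

/-- `φ : ℝ → (V → ℝ)` (restricted to `[0,r]`) is a solution of `x' = f(x) & Q`
of duration `r ≥ 0`: `t ↦ φ t x` is differentiable with derivative `f (φ s)`
at each `s ∈ [0,r]`, `φ s ∈ Q` on `[0,r]`, and all other variables stay
constant along `φ`. -/
def IsSolution (x : V) (f : (V → ℝ) → ℝ) (Q : Set (V → ℝ)) (r : ℝ)
    (φ : ℝ → (V → ℝ)) : Prop :=
  0 ≤ r ∧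
  (∀ s ∈ Set.Icc 0 r, HasDerivAt (fun t => φ t x) (f (φ s)) s) ∧
  (∀ s ∈ Set.Icc 0 r, φ s ∈ Q) ∧
  (∀ s ∈ Set.Icc 0 r, ∀ y, y ≠ x → φ s y = φ 0 y)

mutual
/-- Angel's semi-competitive winning region ς_α(X,Y). -/
def angel : Game V → Set (V → ℝ) → Set (V → ℝ) → Set (V → ℝ)
  | .assign x e, X, _ => {ω | Function.update ω x (e ω) ∈ X}
  | .ode x f Q, X, _ =>
      {ω | ∃ r φ, IsSolution x f Q r φ ∧ φ 0 = ω ∧ φ r ∈ X}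
  | .test Q, X, _ => Q ∩ X
  | .choice a b, X, Y => angel a X Y ∪ angel b X Y
  | .seq a b, X, Y => angel a (angel b X Y) (demon b X Y)
  | .dual a, X, Y => demon a Y X
  | .star a, X, Y =>
      ⋂₀ {Z | X ∪ angel a Z Zᶜ ⊆ Z} ∪
      ⋂₀ {Z | (X ∩ Y) ∪ (angel a Z Z ∩ demon a Z Z) ⊆ Z}

/-- Demon's semi-competitive winning region δ_α(X,Y). -/
def demon : Game V → Set (V → ℝ) → Set (V → ℝ) → Set (V → ℝ)
  | .assign x e, _, Y => {ω | Function.update ω x (e ω) ∈ Y}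
  | .ode x f Q, X, Y =>
      {ω | ∀ r φ, IsSolution x f Q r φ → φ 0 = ω → ∀ s ∈ Set.Icc 0 r, φ s ∈ Y} ∪
      {ω | ∃ r φ, IsSolution x f Q r φ ∧ φ 0 = ω ∧ ∃ s ∈ Set.Icc 0 r, φ s ∈ X ∩ Y}
  | .test Q, _, Y => Qᶜ ∪ Y
  | .choice a b, X, Y =>
      (demon a X Y ∩ demon b X Y) ∪ (demon a X Y ∩ angel a X Y) ∪
      (demon b X Y ∩ angel b X Y)
  | .seq a b, X, Y => demon a (angel b X Y) (demon b X Y)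
  | .dual a, X, Y => angel a Y X
  | .star a, X, Y =>
      ⋃₀ {Z | Z ⊆ Y ∩ demon a Zᶜ Z} ∪
      ⋂₀ {Z | (X ∩ Y) ∪ (angel a Z Z ∩ demon a Z Z) ⊆ Z}
end

/-- Angel's one-argument zero-sum dGL winning region ς_α(X). -/
def dglAngel : Game V → Set (V → ℝ) → Set (V → ℝ)
  | .assign x e, X => {ω | Function.update ω x (e ω) ∈ X}
  | .ode x f Q, X => {ω | ∃ r φ, IsSolution x f Q r φ ∧ φ 0 = ω ∧ φ r ∈ X}
  | .test Q, X => Q ∩ X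
  | .choice a b, X => dglAngel a X ∪ dglAngel b X
  | .seq a b, X => dglAngel a (dglAngel b X)
  | .dual a, X => (dglAngel a Xᶜ)ᶜ
  | .star a, X => ⋂₀ {Z | X ∪ dglAngel a Z ⊆ Z}

/-- Demon's one-argument zero-sum dGL winning region δ_α(X) = (ς_α(Xᶜ))ᶜ. -/
def dglDemon (g : Game V) (X : Set (V → ℝ)) : Set (V → ℝ) :=
  (dglAngel g Xᶜ)ᶜ

/-- Systematization α^{-d}: removes all dual operators. -/
def Game.sys : Game V → Game V
  | .assign x e => .assign x e
  | .ode x f Q => .ode x f Q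
  | .test Q => .test Q
  | .choice a b => .choice a.sys b.sys
  | .seq a b => .seq a.sys b.sys
  | .dual a => a.sys
  | .star a => .star a.sys

lemma angel_demon_disjoint (α : Game V) :
    ∀ X Y : Set (V → ℝ), X ∩ Y = ∅ → angel α X Y ∩ demon α X Y = ∅ := by
  induction α with
  | assign x e =>
    intro X Y h
    ext ω
    simp only [angel, demon, Set.mem_inter_iff, Set.mem_setOf_eq, Set.mem_empty_iff_false,
      iff_false, not_and]
    intro h1 h2
    exact absurd (Set.mem_inter h1 h2) (by simp [h])
  | ode x f Q =>
    intro X Y h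
    ext ω
    simp only [angel, demon, Set.mem_inter_iff, Set.mem_setOf_eq, Set.mem_union,
      Set.mem_empty_iff_false, iff_false, not_and]
    rintro ⟨r, φ, hsol, h0, hX⟩ (hall | ⟨r', φ', hsol', h0', s, hs, hsX, hsY⟩)
    · have := hall r φ hsol h0 r ⟨hsol.1, le_refl r⟩
      exact absurd (Set.mem_inter hX this) (by simp [h])
    · exact absurd (Set.mem_inter hsX hsY) (by simp [h])
  | test Q =>
    intro X Y h
    ext ω
    simp only [angel, demon]
    constructor
    · rintro ⟨⟨hQ, hX⟩, (hQc | hY)⟩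
      · exact hQc hQ
      · exact absurd (Set.mem_inter hX hY) (by simp [h])
    · exact fun h => h.elim
  | choice a b iha ihb =>
    intro X Y h
    have ha := iha X Y h
    have hb := ihb X Y h
    ext ω
    simp only [angel, demon, Set.mem_inter_iff, Set.mem_union, Set.mem_empty_iff_false,
      iff_false, not_and]
    have ha' : ω ∉ angel a X Y ∩ demon a X Y := by simp [ha]
    have hb' : ω ∉ angel b X Y ∩ demon b X Y := by simp [hb]
    simp only [Set.mem_inter_iff] at ha' hb'
    tauto
  | seq a b iha ihb =>
    intro X Y h
    exact iha _ _ (ihb X Y h)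
  | dual a iha =>
    intro X Y h
    have := iha Y X (by rw [Set.inter_comm]; exact h)
    rw [Set.inter_comm] at this
    simpa [angel, demon] using this
  | star a iha =>
    intro X Y h
    have hIempty : (⋂₀ {Z | (X ∩ Y) ∪ (angel a Z Z ∩ demon a Z Z) ⊆ Z} : Set (V → ℝ)) = ∅ := by
      apply Set.eq_empty_of_subset_empty
      apply Set.sInter_subset_of_mem
      show (X ∩ Y) ∪ (angel a ∅ ∅ ∩ demon a ∅ ∅) ⊆ ∅
      rw [h, iha ∅ ∅ (by simp)]
      simp
    ext ω
    simp only [angel, demon, hIempty, Set.union_empty, Set.mem_inter_iff,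
      Set.mem_empty_iff_false, iff_false, not_and]
    intro hF hG
    obtain ⟨Z₀, hZ₀, hωZ₀⟩ := hG
    have hZ₀Y : Z₀ ⊆ Y := fun z hz => (hZ₀ hz).1
    have hZ₀δ : Z₀ ⊆ demon a Z₀ᶜ Z₀ := fun z hz => (hZ₀ hz).2
    have hmem : Z₀ᶜ ∈ {Z | X ∪ angel a Z Zᶜ ⊆ Z} := by
      show X ∪ angel a Z₀ᶜ Z₀ᶜᶜ ⊆ Z₀ᶜ
      rw [compl_compl]
      apply Set.union_subset
      · intro z hz hzZ₀
        exact absurd (Set.mem_inter hz (hZ₀Y hzZ₀)) (by simp [h])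
      · intro z hz hzZ₀
        have := iha Z₀ᶜ Z₀ (by simp)
        exact absurd (Set.mem_inter hz (hZ₀δ hzZ₀)) (by simp [this])
    exact (hF Z₀ᶜ hmem) hωZ₀

lemma angel_demon_mono (α : Game V) :
    (∀ X Y A B : Set (V → ℝ), X ⊆ A → X ∩ Y = ∅ → angel α X Y ⊆ angel α A B) ∧
    (∀ X Y A B : Set (V → ℝ), Y ⊆ B → X ∩ Y = ∅ → demon α X Y ⊆ demon α A B) := by
  induction α with
  | assign x e =>
    refine ⟨fun X Y A B hXA _ ω hω => hXA hω, fun X Y A B hYB _ ω hω => hYB hω⟩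
  | ode x f Q =>
    constructor
    · rintro X Y A B hXA _ ω ⟨r, φ, hsol, h0, hX⟩
      exact ⟨r, φ, hsol, h0, hXA hX⟩
    · rintro X Y A B hYB hXY ω (hall | ⟨r, φ, hsol, h0, s, hs, hsX, hsY⟩)
      · exact Or.inl fun r φ hsol h0 s hs => hYB (hall r φ hsol h0 s hs)
      · exact absurd (Set.mem_inter hsX hsY) (by simp [hXY])
  | test Q =>
    constructor
    · rintro X Y A B hXA _ ω ⟨hQ, hX⟩
      exact ⟨hQ, hXA hX⟩
    · rintro X Y A B hYB _ ω (hQc | hY)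
      · exact Or.inl hQc
      · exact Or.inr (hYB hY)
  | choice a b iha ihb =>
    constructor
    · rintro X Y A B hXA hXY ω (hω | hω)
      · exact Or.inl (iha.1 X Y A B hXA hXY hω)
      · exact Or.inr (ihb.1 X Y A B hXA hXY hω)
    · intro X Y A B hYB hXY ω hω
      simp only [demon, Set.mem_union, Set.mem_inter_iff] at hω ⊢
      rcases hω with (⟨hda, hdb⟩ | ⟨hda, hsa⟩) | ⟨hdb, hsb⟩
      · exact Or.inl (Or.inl ⟨iha.2 X Y A B hYB hXY hda, ihb.2 X Y A B hYB hXY hdb⟩)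
      · exact absurd (Set.mem_inter hsa hda) (by simp [angel_demon_disjoint a X Y hXY])
      · exact absurd (Set.mem_inter hsb hdb) (by simp [angel_demon_disjoint b X Y hXY])
  | seq a b iha ihb =>
    have hd : ∀ X Y : Set (V → ℝ), X ∩ Y = ∅ → angel b X Y ∩ demon b X Y = ∅ :=
      angel_demon_disjoint b
    constructor
    · intro X Y A B hXA hXY
      exact iha.1 _ _ _ _ (ihb.1 X Y A B hXA hXY) (hd X Y hXY)
    · intro X Y A B hYB hXY
      exact iha.2 _ _ _ _ (ihb.2 X Y A B hYB hXY) (hd X Y hXY)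
  | dual a iha =>
    constructor
    · intro X Y A B hXA hXY
      exact iha.2 Y X B A hXA (by rw [Set.inter_comm]; exact hXY)
    · intro X Y A B hYB hXY
      exact iha.1 Y X B A hYB (by rw [Set.inter_comm]; exact hXY)
  | star a iha =>
    have hIempty : ∀ X Y : Set (V → ℝ), X ∩ Y = ∅ →
        (⋂₀ {Z | (X ∩ Y) ∪ (angel a Z Z ∩ demon a Z Z) ⊆ Z} : Set (V → ℝ)) = ∅ := by
      intro X Y h
      apply Set.eq_empty_of_subset_empty
      apply Set.sInter_subset_of_mem
      show (X ∩ Y) ∪ (angel a ∅ ∅ ∩ demon a ∅ ∅) ⊆ ∅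
      rw [h, angel_demon_disjoint a ∅ ∅ (by simp)]
      simp
    constructor
    · intro X Y A B hXA hXY ω hω
      simp only [angel, Set.mem_union, hIempty X Y hXY, Set.mem_empty_iff_false, or_false]
        at hω
      simp only [angel, Set.mem_union]
      refine Or.inl ?_
      intro Z hZ
      exact hω Z (by
        refine Set.Subset.trans ?_ hZ
        exact Set.union_subset_union_left _ hXA)
    · intro X Y A B hYB hXY ω hω
      simp only [demon, Set.mem_union, hIempty X Y hXY, Set.mem_empty_iff_false, or_false]
        at hω
      simp only [demon, Set.mem_union]
      obtain ⟨Z₀, hZ₀, hωZ₀⟩ := hω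
      refine Or.inl ⟨Z₀, ?_, hωZ₀⟩
      intro z hz
      exact ⟨hYB (hZ₀ hz).1, (hZ₀ hz).2⟩
/-- Disjoint monotonicity for Angel: if `X ⊆ A` and `X ∩ Y = ∅`
then `ς_α(X,Y) ⊆ ς_α(A,B)` for arbitrary `B`. -/
theorem disjoint_monotonicity_angel (α : Game V) (X Y A B : Set (V → ℝ))
    (hXA : X ⊆ A) (hXY : X ∩ Y = ∅) :
    angel α X Y ⊆ angel α A B := by

  exact (angel_demon_mono α).1 X Y A B hXA hXY
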